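/- The map λ : ℂ⁴ → ℂ⁴, λ(z₁,z₂,z₃,z₄) = (ξz₃, z₄, ξz₁, z₂), is a group automorphism of (ℂ⁴,⋆), i.e. λ(a ⋆ b) = λ(a) ⋆ λ(b) for all a,b ∈ ℂ⁴; it satisfies λ³(z₁,z₂,z₃,z₄) = (z₃,z₄,z₁,z₂) and λ⁶ = id (so λ generates a finite group of automorphisms), and it maps the subset Γ = {(z₁,z₂,z₃,z₄) : zⱼ ∈ Λ for j = 1,2,3,4} bijectively onto itself. -/
import Mathlib


/-- The product `⋆` on `ℂ⁴`: `(z₁,z₂,z₃,z₄) ⋆ (w₁,w₂,w₃,w₄) =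
(z₁+w₁, z₂+w₂+(i/4)(z₁w̄₁ − z̄₁w₁), z₃+w₃, z₄+w₄+(i/4)(z₃w̄₃ − z̄₃w₃))`. -/
noncomputable def starMul (a b : ℂ × ℂ × ℂ × ℂ) : ℂ × ℂ × ℂ × ℂ :=
  (a.1 + b.1,
   a.2.1 + b.2.1 + Complex.I / 4 * (a.1 * (starRingEnd ℂ) b.1 - (starRingEnd ℂ) a.1 * b.1),
   a.2.2.1 + b.2.2.1,
   a.2.2.2 + b.2.2.2 +
     Complex.I / 4 * (a.2.2.1 * (starRingEnd ℂ) b.2.2.1 - (starRingEnd ℂ) a.2.2.1 * b.2.2.1))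

/-- The primitive cube root of unity `ξ = e^{2πi/3}`. -/
noncomputable def xi : ℂ := Complex.exp (2 * Real.pi * Complex.I / 3)

/-- The lattice `Λ = ℤ + ℤξ` of Eisenstein integers. -/
def Lam : Set ℂ := {z | ∃ a b : ℤ, z = (a : ℂ) + (b : ℂ) * xi}

/-- The discrete subgroup `Γ ⊆ ℂ⁴` of points with all coordinates in `Λ`. -/
def Gam : Set (ℂ × ℂ × ℂ × ℂ) :=
  {z | z.1 ∈ Lam ∧ z.2.1 ∈ Lam ∧ z.2.2.1 ∈ Lam ∧ z.2.2.2 ∈ Lam}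

/-- The map `λ(z₁,z₂,z₃,z₄) = (ξz₃, z₄, ξz₁, z₂)`. -/
noncomputable def lam (z : ℂ × ℂ × ℂ × ℂ) : ℂ × ℂ × ℂ × ℂ :=
  (xi * z.2.2.1, z.2.2.2, xi * z.1, z.2.1)

lemma xi_cube : xi ^ 3 = 1 := by
  unfold xi
  rw [← Complex.exp_nat_mul]
  rw [show (3 : ℕ) * (2 * (Real.pi : ℂ) * Complex.I / 3) = 2 * Real.pi * Complex.I by ring]
  exact Complex.exp_two_pi_mul_I

lemma xi_mul_conj : xi * (starRingEnd ℂ) xi = 1 := by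
  unfold xi
  rw [← Complex.exp_conj, ← Complex.exp_add]
  simp only [map_div₀, map_mul, Complex.conj_I, Complex.conj_ofReal, map_ofNat]
  rw [show 2 * (Real.pi : ℂ) * Complex.I / 3 + 2 * (Real.pi : ℂ) * -Complex.I / 3 = 0 by ring]
  exact Complex.exp_zero

lemma xi_ne_one : xi ≠ 1 := by
  have h : xi = Complex.exp ((2 * Real.pi / 3 : ℝ) * Complex.I) := by
    unfold xi; push_cast; ring_nf
  have him : xi.im = Real.sin (2 * Real.pi / 3) := by
    rw [h, Complex.exp_ofReal_mul_I_im]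
  have hpos : 0 < Real.sin (2 * Real.pi / 3) := by
    apply Real.sin_pos_of_pos_of_lt_pi
    · positivity
    · nlinarith [Real.pi_pos]
  intro hxe
  rw [hxe] at him
  simp at him
  linarith [him ▸ hpos]

lemma xi_sum : xi ^ 2 + xi + 1 = 0 := by
  have h : (xi - 1) * (xi ^ 2 + xi + 1) = 0 := by linear_combination xi_cube
  rcases mul_eq_zero.mp h with h1 | h2
  · exact absurd (sub_eq_zero.mp h1) xi_ne_one
  · exact h2

lemma xi_mul_mem {z : ℂ} (hz : z ∈ Lam) : xi * z ∈ Lam := by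
  obtain ⟨a, b, rfl⟩ := hz
  exact ⟨-b, a - b, by push_cast; linear_combination (b : ℂ) * xi_sum⟩

/-- The map `λ(z₁,z₂,z₃,z₄) = (ξz₃, z₄, ξz₁, z₂)` is a group automorphism of `(ℂ⁴, ⋆)`,
satisfies `λ³(z₁,z₂,z₃,z₄) = (z₃,z₄,z₁,z₂)` and `λ⁶ = id` (so `λ` generates a finite group
of automorphisms), and maps the subset `Γ = Λ⁴` bijectively onto itself. -/
theorem lam_automorphism_order_six_preserves_Gamma :
    (∀ a b : ℂ × ℂ × ℂ × ℂ, lam (starMul a b) = starMul (lam a) (lam b)) ∧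
    (∀ z : ℂ × ℂ × ℂ × ℂ, lam (lam (lam z)) = (z.2.2.1, z.2.2.2, z.1, z.2.1)) ∧
    lam ∘ lam ∘ lam ∘ lam ∘ lam ∘ lam = id ∧
    Set.BijOn lam Gam Gam := by

  have hc := xi_mul_conj
  have part1 : ∀ a b : ℂ × ℂ × ℂ × ℂ, lam (starMul a b) = starMul (lam a) (lam b) := by
    intro a b
    simp only [lam, starMul, map_mul]
    refine Prod.ext ?_ (Prod.ext ?_ (Prod.ext ?_ ?_))
    · ring
    · show a.2.2.2 + b.2.2.2 + _ = _
      linear_combination (-(Complex.I / 4) * (a.2.2.1 * (starRingEnd ℂ) b.2.2.1 -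
        (starRingEnd ℂ) a.2.2.1 * b.2.2.1)) * hc
    · ring
    · show a.2.1 + b.2.1 + _ = _
      linear_combination (-(Complex.I / 4) * (a.1 * (starRingEnd ℂ) b.1 -
        (starRingEnd ℂ) a.1 * b.1)) * hc
  have part2 : ∀ z : ℂ × ℂ × ℂ × ℂ, lam (lam (lam z)) = (z.2.2.1, z.2.2.2, z.1, z.2.1) := by
    intro z
    simp only [lam]
    refine Prod.ext ?_ (Prod.ext rfl (Prod.ext ?_ rfl))
    · show xi * (xi * (xi * z.2.2.1)) = z.2.2.1
      linear_combination z.2.2.1 * xi_cube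
    · show xi * (xi * (xi * z.1)) = z.1
      linear_combination z.1 * xi_cube
  have part3 : lam ∘ lam ∘ lam ∘ lam ∘ lam ∘ lam = id := by
    funext z
    show lam (lam (lam (lam (lam (lam z))))) = z
    rw [part2 z, part2]
  have h6 : ∀ z : ℂ × ℂ × ℂ × ℂ, lam (lam (lam (lam (lam (lam z))))) = z := by
    intro z
    have := congrFun part3 z
    simpa using this
  have hmaps : ∀ z ∈ Gam, lam z ∈ Gam := by
    rintro z ⟨h1, h2, h3, h4⟩
    exact ⟨xi_mul_mem h3, h4, xi_mul_mem h1, h2⟩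
  refine ⟨part1, part2, part3, hmaps, ?_, ?_⟩
  · intro x _ y _ h
    have hx := h6 x
    rw [h] at hx
    exact hx.symm.trans (h6 y)
  · intro z hz
    exact ⟨lam (lam (lam (lam (lam z)))),
      hmaps _ (hmaps _ (hmaps _ (hmaps _ (hmaps _ hz)))), h6 z⟩
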